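/- arXiv:1908.05155 — 3 statements merged into one kernel-verified Lean document; each statement's English description precedes it below -/
import Mathlib

section
/- Let n, d be positive integers and let f be a real homogeneous polynomial of degree 2n in d variables with spherical-harmonic decomposition f_0, f_2, …, f_{2n}. Then for every k ∈ {0, 1, …, n}, sup_{x∈S^{d−1}} |f_{2k}(x)| ≤ (2n)!·(1+(2n)!)^n · sup_{x∈S^{d−1}} |f(x)|. In particular the bound is independent of the dimension d. -/
/-- The Laplacian `Δ = ∑ i, ∂²/∂x_i²` of a polynomial. -/
noncomputable def polyLap {d : ℕ} (f : MvPolynomial (Fin d) ℝ) : MvPolynomial (Fin d) ℝ :=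
  ∑ i : Fin d, MvPolynomial.pderiv i (MvPolynomial.pderiv i f)

/-- `g 0, g 1, …, g n` is the spherical-harmonic decomposition of the homogeneous degree-`2n`
polynomial `f`: each `g k` is homogeneous harmonic of degree `2k` and
`f(x) = ∑_k ‖x‖^{2(n-k)} g_k(x)`. -/
def IsSHDecomp (d n : ℕ) (f : MvPolynomial (Fin d) ℝ)
    (g : ℕ → MvPolynomial (Fin d) ℝ) : Prop :=
  (∀ k, k ≤ n → (g k).IsHomogeneous (2 * k) ∧ polyLap (g k) = 0) ∧
  ∀ x : Fin d → ℝ,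
    MvPolynomial.eval x f
      = ∑ k ∈ Finset.range (n + 1), (∑ i, x i ^ 2) ^ (n - k) * MvPolynomial.eval x (g k)

/-! ### Auxiliary material -/

section Aux

open Polynomial MvPolynomial Filter

/-- Restriction of a multivariate polynomial to the line through `a` in direction `i`. -/
noncomputable def restr {d : ℕ} (i : Fin d) (a : Fin d → ℝ) (p : MvPolynomial (Fin d) ℝ) :
    Polynomial ℝ :=
  MvPolynomial.aeval (fun j => if j = i then Polynomial.X else Polynomial.C (a j)) p

lemma restr_eval {d : ℕ} (i : Fin d) (a : Fin d → ℝ) (p : MvPolynomial (Fin d) ℝ) (t : ℝ) :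
    (restr i a p).eval t = MvPolynomial.eval (Function.update a i t) p := by
  induction p using MvPolynomial.induction_on with
  | C c => simp [restr]
  | add p q hp hq => simp only [restr, map_add, Polynomial.eval_add] at *; simp [hp, hq]
  | mul_X p j hp =>
      simp only [restr, map_mul, Polynomial.eval_mul, MvPolynomial.aeval_X,
        MvPolynomial.eval_mul, MvPolynomial.eval_X] at *
      rw [hp]
      rcases eq_or_ne j i with h | h
      · subst h; simp [Function.update_self]
      · simp [h, Function.update_of_ne h]

lemma restr_derivative {d : ℕ} (i : Fin d) (a : Fin d → ℝ) (p : MvPolynomial (Fin d) ℝ) :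
    (restr i a p).derivative = restr i a (MvPolynomial.pderiv i p) := by
  induction p using MvPolynomial.induction_on with
  | C c => simp [restr]
  | add p q hp hq => simp [restr, map_add] at *; simp [hp, hq]
  | mul_X p j hp =>
      simp only [restr, map_mul, MvPolynomial.aeval_X, Polynomial.derivative_mul] at *
      rw [hp, MvPolynomial.pderiv_mul, map_add, map_mul, map_mul, MvPolynomial.aeval_X]
      rcases eq_or_ne j i with h | h
      · subst h
        simp [MvPolynomial.pderiv_X_self]
      · simp [h, MvPolynomial.pderiv_X_of_ne h]

lemma second_deriv_nonpos_of_isLocalMax (q : Polynomial ℝ) (t0 : ℝ)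
    (h : IsLocalMax (fun t => q.eval t) t0) :
    (q.derivative.derivative).eval t0 ≤ 0 := by
  have hd1 : q.derivative.eval t0 = 0 := by
    have := h.deriv_eq_zero
    rwa [Polynomial.deriv] at this
  set r : Polynomial ℝ := Polynomial.taylor t0 q - Polynomial.C (q.eval t0) with hr
  have h0 : r.coeff 0 = 0 := by
    simp [hr, Polynomial.taylor_coeff_zero]
  have h1 : r.coeff 1 = 0 := by
    simp [hr, Polynomial.taylor_coeff_one, hd1]
  have hdvd : (Polynomial.X : Polynomial ℝ) ^ 2 ∣ r := by
    rw [Polynomial.X_pow_dvd_iff]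
    intro m hm
    interval_cases m <;> assumption
  obtain ⟨s, hs⟩ := hdvd
  have hco : r.coeff 2 = s.coeff 0 := by
    rw [hs, Polynomial.coeff_X_pow_mul]
  have hrev : ∀ u : ℝ, r.eval u = q.eval (u + t0) - q.eval t0 := by
    intro u
    simp [hr, Polynomial.taylor_eval]
  have hloc : ∀ᶠ u in nhds (0 : ℝ), r.eval u ≤ 0 := by
    have : Filter.Tendsto (fun u : ℝ => u + t0) (nhds 0) (nhds t0) := by
      exact (continuous_id.add continuous_const).tendsto' (0 : ℝ) t0 (by simp)
    filter_upwards [this.eventually h] with u hu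
    rw [hrev]
    linarith [hu]
  have hs0 : s.eval 0 ≤ 0 := by
    have hne : (nhdsWithin (0:ℝ) (Set.Ioi 0)).NeBot := nhdsGT_neBot 0
    have htend : Filter.Tendsto (fun u : ℝ => s.eval u) (nhdsWithin 0 (Set.Ioi 0))
        (nhds (s.eval 0)) :=
      (Polynomial.continuous s).continuousAt.tendsto.mono_left nhdsWithin_le_nhds
    refine le_of_tendsto htend ?_
    have hloc' : ∀ᶠ u in nhdsWithin (0:ℝ) (Set.Ioi 0), r.eval u ≤ 0 :=
      hloc.filter_mono nhdsWithin_le_nhds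
    filter_upwards [hloc', self_mem_nhdsWithin] with u hu hu'
    have hupos : (0:ℝ) < u := Set.mem_Ioi.mp hu'
    have hu2 : (0:ℝ) < u ^ 2 := by positivity
    have : r.eval u = u ^ 2 * s.eval u := by rw [hs]; simp
    nlinarith
  have hc2 : r.coeff 2 = (Polynomial.hasseDeriv 2 q).eval t0 := by
    have : r.coeff 2 = (Polynomial.taylor t0 q).coeff 2 := by
      simp [hr, Polynomial.coeff_C]
    rw [this, Polynomial.taylor_coeff]
  have hfact : (q.derivative.derivative).eval t0 = 2 * (Polynomial.hasseDeriv 2 q).eval t0 := by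
    have h2 := congrFun (Polynomial.factorial_smul_hasseDeriv (R := ℝ) 2) q
    simp only [Nat.factorial, LinearMap.smul_apply] at h2
    have : q.derivative.derivative = (derivative^[2]) q := by
      simp [Function.iterate_succ, Function.comp]
    rw [this, ← h2]
    norm_num [Polynomial.eval_smul]
  rw [hfact, ← hc2, hco, Polynomial.coeff_zero_eq_eval_zero]
  linarith

lemma polyLap_add {d : ℕ} (p q : MvPolynomial (Fin d) ℝ) :
    polyLap (p + q) = polyLap p + polyLap q := by
  simp [polyLap, map_add, Finset.sum_add_distrib]

lemma polyLap_C_mul {d : ℕ} (c : ℝ) (p : MvPolynomial (Fin d) ℝ) :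
    polyLap (MvPolynomial.C c * p) = MvPolynomial.C c * polyLap p := by
  simp [polyLap, MvPolynomial.pderiv_C_mul, Finset.mul_sum]

lemma polyLap_sum {d : ℕ} {ι : Type*} (s : Finset ι) (p : ι → MvPolynomial (Fin d) ℝ) :
    polyLap (∑ k ∈ s, p k) = ∑ k ∈ s, polyLap (p k) := by
  simp only [polyLap, map_sum]
  rw [Finset.sum_comm]

lemma polyLap_sumsq {d : ℕ} :
    polyLap (∑ j : Fin d, (MvPolynomial.X j : MvPolynomial (Fin d) ℝ) ^ 2)
      = MvPolynomial.C ((2 : ℝ) * d) := by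
  classical
  rw [polyLap_sum]
  have h1 : ∀ j : Fin d, polyLap ((MvPolynomial.X j : MvPolynomial (Fin d) ℝ) ^ 2) = 2 := by
    intro j
    rw [polyLap]
    have : ∀ i : Fin d,
        MvPolynomial.pderiv i (MvPolynomial.pderiv i
          ((MvPolynomial.X j : MvPolynomial (Fin d) ℝ) ^ 2)) = if i = j then 2 else 0 := by
      intro i
      rw [sq, MvPolynomial.pderiv_mul]
      rcases eq_or_ne i j with h | h
      · subst h
        simp [MvPolynomial.pderiv_X_self, MvPolynomial.pderiv_mul]
        ring
      · simp [MvPolynomial.pderiv_X_of_ne (Ne.symm h), h]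
    rw [Finset.sum_congr rfl fun i _ => this i]
    simp
  rw [Finset.sum_congr rfl fun j _ => h1 j]
  rw [Finset.sum_const, Finset.card_univ, Fintype.card_fin, nsmul_eq_mul]
  simp [map_mul, map_natCast, map_ofNat]
  ring

/-- Maximum principle for polynomials with vanishing Laplacian. -/
lemma maxPrinciple {d : ℕ} (hd : 0 < d) (H : MvPolynomial (Fin d) ℝ)
    (hH : polyLap H = 0) (M : ℝ)
    (hM : ∀ x : Fin d → ℝ, (∑ i, x i ^ 2) = 1 → MvPolynomial.eval x H ≤ M) :
    ∀ y : Fin d → ℝ, (∑ i, y i ^ 2) ≤ 1 → MvPolynomial.eval y H ≤ M := by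
  intro y hy
  refine le_of_forall_pos_le_add ?_
  intro ε hε
  set Q : MvPolynomial (Fin d) ℝ := ∑ j : Fin d, (MvPolynomial.X j) ^ 2 with hQdef
  set U : MvPolynomial (Fin d) ℝ := H + MvPolynomial.C ε * Q with hUdef
  have hevalU : ∀ z : Fin d → ℝ, MvPolynomial.eval z U
      = MvPolynomial.eval z H + ε * ∑ i, z i ^ 2 := by
    intro z
    simp [hUdef, hQdef]
  have hsq_nonneg : ∀ z : Fin d → ℝ, (0:ℝ) ≤ ∑ i, z i ^ 2 := fun z =>
    Finset.sum_nonneg fun i _ => sq_nonneg _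
  set K : Set (Fin d → ℝ) := {x | (∑ i, x i ^ 2) ≤ 1} with hKdef
  have hcont_sum : Continuous fun x : Fin d → ℝ => ∑ i, x i ^ 2 := by
    apply continuous_finset_sum
    intro i _
    exact (continuous_apply i).pow 2
  have hKclosed : IsClosed K := isClosed_le hcont_sum continuous_const
  have hKsub : K ⊆ Metric.closedBall 0 1 := by
    intro x hx
    rw [Metric.mem_closedBall, dist_pi_le_iff zero_le_one]
    intro i
    rw [Real.dist_eq]
    simp only [Pi.zero_apply, sub_zero]
    have h1 : x i ^ 2 ≤ 1 := le_trans (Finset.single_le_sum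
      (fun i _ => sq_nonneg (x i)) (Finset.mem_univ i)) hx
    nlinarith [abs_nonneg (x i), sq_abs (x i)]
  have hKcompact : IsCompact K :=
    (isCompact_closedBall 0 1).of_isClosed_subset hKclosed hKsub
  have hKne : K.Nonempty := ⟨0, by simp [hKdef]⟩
  have hcontU : Continuous fun x : Fin d → ℝ => MvPolynomial.eval x U :=
    MvPolynomial.continuous_eval _
  obtain ⟨a, haK, hamax⟩ := hKcompact.exists_isMaxOn hKne hcontU.continuousOn
  have hmax : ∀ z ∈ K, MvPolynomial.eval z U ≤ MvPolynomial.eval a U := fun z hz => hamax hz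
  have hbdy : (∑ i, a i ^ 2) = 1 := by
    by_contra hb
    have hlt : (∑ i, a i ^ 2) < 1 := lt_of_le_of_ne haK hb
    have key : ∀ i : Fin d,
        MvPolynomial.eval a (MvPolynomial.pderiv i (MvPolynomial.pderiv i U)) ≤ 0 := by
      intro i
      have hfun : (fun t => (restr i a U).eval t)
          = fun t => MvPolynomial.eval (Function.update a i t) U := by
        funext t; exact restr_eval i a U t
      have hloc : IsLocalMax (fun t => (restr i a U).eval t) (a i) := by
        rw [hfun]
        have hcont2 : Continuous fun t : ℝ => ∑ j, (Function.update a i t j) ^ 2 :=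
          hcont_sum.comp (continuous_const.update i continuous_id)
        have hval : (∑ j, (Function.update a i (a i) j) ^ 2) < 1 := by
          rw [Function.update_eq_self]; exact hlt
        have hopen : ∀ᶠ t in nhds (a i), (∑ j, (Function.update a i t j) ^ 2) < 1 :=
          hcont2.continuousAt (Iio_mem_nhds hval)
        filter_upwards [hopen] with t ht
        have hK' : Function.update a i t ∈ K := le_of_lt ht
        have := hmax _ hK'
        simpa [Function.update_eq_self] using this
      have h2 := second_deriv_nonpos_of_isLocalMax (restr i a U) (a i) hloc
      rw [restr_derivative, restr_derivative, restr_eval, Function.update_eq_self] at h2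
      exact h2
    have hsum : MvPolynomial.eval a (polyLap U) ≤ 0 := by
      rw [polyLap, map_sum]
      exact Finset.sum_nonpos fun i _ => key i
    have hUlap : polyLap U = MvPolynomial.C (ε * (2 * d)) := by
      rw [hUdef, polyLap_add, hH, polyLap_C_mul, hQdef, polyLap_sumsq]
      rw [zero_add, ← map_mul]
    rw [hUlap] at hsum
    simp only [MvPolynomial.eval_C] at hsum
    have hdpos : (0:ℝ) < d := by exact_mod_cast hd
    nlinarith
  have h1 : MvPolynomial.eval y H ≤ MvPolynomial.eval y U := by
    rw [hevalU]
    nlinarith [hsq_nonneg y, hε.le]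
  have h2 : MvPolynomial.eval a U = MvPolynomial.eval a H + ε := by
    rw [hevalU, hbdy, mul_one]
  have h3 : MvPolynomial.eval a H ≤ M := hM a hbdy
  have h4 := hmax y hy
  linarith

lemma coeff_prod_bound (T : Finset ℕ) (c y : ℕ → ℝ) :
    ∀ k, |(∏ i ∈ T, (Polynomial.C (c i) * (Polynomial.X - Polynomial.C (y i)))).coeff k|
      ≤ ∏ i ∈ T, (|c i| * (1 + |y i|)) := by
  classical
  induction T using Finset.induction_on with
  | empty =>
      intro k
      simp only [Finset.prod_empty, Polynomial.coeff_one]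
      split_ifs <;> norm_num
  | @insert i T hiT IH =>
      intro k
      rw [Finset.prod_insert hiT, Finset.prod_insert hiT]
      set P : Polynomial ℝ := ∏ m ∈ T, (Polynomial.C (c m) * (Polynomial.X - Polynomial.C (y m)))
        with hP
      have hB : (0:ℝ) ≤ ∏ m ∈ T, (|c m| * (1 + |y m|)) :=
        Finset.prod_nonneg fun m _ => by positivity
      have hexp : Polynomial.C (c i) * (Polynomial.X - Polynomial.C (y i)) * P
          = Polynomial.C (c i) * (Polynomial.X * P) - Polynomial.C (c i * y i) * P := by
        rw [map_mul]; ring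
      rw [hexp, Polynomial.coeff_sub, Polynomial.coeff_C_mul, Polynomial.coeff_C_mul]
      have hXP : |(Polynomial.X * P).coeff k| ≤ ∏ m ∈ T, (|c m| * (1 + |y m|)) := by
        cases k with
        | zero => simp [Polynomial.mul_coeff_zero, hB]
        | succ k' => rw [Polynomial.coeff_X_mul]; exact IH k'
      calc |c i * (Polynomial.X * P).coeff k - c i * y i * P.coeff k|
          ≤ |c i * (Polynomial.X * P).coeff k| + |c i * y i * P.coeff k| := abs_sub _ _
        _ = |c i| * |(Polynomial.X * P).coeff k| + |c i| * |y i| * |P.coeff k| := by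
            rw [abs_mul, abs_mul, abs_mul]
        _ ≤ |c i| * (∏ m ∈ T, (|c m| * (1 + |y m|)))
            + |c i| * |y i| * (∏ m ∈ T, (|c m| * (1 + |y m|))) := by
            have h2 := abs_nonneg (c i)
            exact add_le_add (mul_le_mul_of_nonneg_left hXP h2)
              (mul_le_mul_of_nonneg_left (IH k) (by positivity))
        _ = |c i| * (1 + |y i|) * ∏ m ∈ T, (|c m| * (1 + |y m|)) := by ring

lemma coeff_bound_of_values (n : ℕ) (hn : 0 < n) (Q : Polynomial ℝ)
    (hdeg : Q.degree < (n + 1 : ℕ)) (M : ℝ)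
    (hval : ∀ j ∈ Finset.range (n + 1), |Q.eval ((j : ℝ) / n)| ≤ M) (k : ℕ) :
    |Q.coeff k| ≤ (n + 1 : ℝ) * (2 * n : ℝ) ^ n * M := by
  classical
  have hM0 : 0 ≤ M := le_trans (abs_nonneg _) (hval 0 (Finset.mem_range.2 (Nat.succ_pos n)))
  set v : ℕ → ℝ := fun j => (j : ℝ) / n with hv
  have hnR : (0:ℝ) < n := by exact_mod_cast hn
  have hinj : Set.InjOn v (Finset.range (n + 1)) := by
    intro a _ b _ hab
    have : (a : ℝ) = b := by
      simp only [hv] at hab; rw [div_left_inj' hnR.ne'] at hab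
      exact_mod_cast hab
    exact_mod_cast this
  have hcard : (Finset.range (n + 1)).card = n + 1 := Finset.card_range _
  have hQ := Lagrange.eq_interpolate (s := Finset.range (n + 1)) (v := v) hinj
    (by rw [hcard]; exact_mod_cast hdeg)
  have hbasis : ∀ j ∈ Finset.range (n + 1),
      |(Lagrange.basis (Finset.range (n + 1)) v j).coeff k| ≤ (2 * n : ℝ) ^ n := by
    intro j hj
    rw [Lagrange.basis]
    have : (∏ m ∈ (Finset.range (n + 1)).erase j, Lagrange.basisDivisor (v j) (v m))
        = ∏ m ∈ (Finset.range (n + 1)).erase j,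
          (Polynomial.C ((v j - v m)⁻¹) * (Polynomial.X - Polynomial.C (v m))) := by
      rfl
    rw [this]
    refine le_trans (coeff_prod_bound _ _ _ k) ?_
    have hcarde : ((Finset.range (n + 1)).erase j).card = n := by
      rw [Finset.card_erase_of_mem hj, hcard]; omega
    calc (∏ m ∈ (Finset.range (n + 1)).erase j, (|(v j - v m)⁻¹| * (1 + |v m|)))
        ≤ ∏ _m ∈ (Finset.range (n + 1)).erase j, (2 * n : ℝ) := by
          refine Finset.prod_le_prod (fun m _ => by positivity) ?_
          intro m hm
          have hmj : m ≠ j := Finset.ne_of_mem_erase hm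
          have hmr : m ∈ Finset.range (n + 1) := Finset.mem_of_mem_erase hm
          have hmn : m ≤ n := Nat.lt_succ_iff.mp (Finset.mem_range.mp hmr)
          have hjn : j ≤ n := Nat.lt_succ_iff.mp (Finset.mem_range.mp hj)
          have hvm : |v m| ≤ 1 := by
            rw [hv, abs_div, abs_of_nonneg (Nat.cast_nonneg m), abs_of_pos hnR,
              div_le_one hnR]
            exact_mod_cast hmn
          have h1le : (1:ℝ) ≤ |(j:ℝ) - m| := by
            have hz : ((j:ℤ) - m) ≠ 0 := sub_ne_zero.2 (by exact_mod_cast hmj.symm)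
            have hzz : (1:ℤ) ≤ |(j:ℤ) - m| := Int.one_le_abs hz
            calc (1:ℝ) ≤ |(((j:ℤ) - m : ℤ) : ℝ)| := by
                  rw [← Int.cast_abs]; exact_mod_cast hzz
              _ = |(j:ℝ) - m| := by push_cast; ring_nf
          have hdiff : (1:ℝ) / n ≤ |v j - v m| := by
            have hvd : v j - v m = ((j : ℝ) - m) / n := by rw [hv]; ring
            rw [hvd, abs_div, abs_of_pos hnR]
            gcongr
          have hinv : |(v j - v m)⁻¹| ≤ n := by
            have hpos : (0:ℝ) < 1/(n:ℝ) := by positivity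
            have h := inv_anti₀ hpos hdiff
            rw [abs_inv]
            calc |v j - v m|⁻¹ ≤ (1/(n:ℝ))⁻¹ := h
              _ = n := by simp
          calc |(v j - v m)⁻¹| * (1 + |v m|) ≤ (n : ℝ) * (1 + 1) := by
                apply mul_le_mul hinv (by linarith) (by positivity) (by positivity)
            _ = 2 * n := by ring
      _ = (2 * n : ℝ) ^ n := by rw [Finset.prod_const, hcarde]
  have hco : Q.coeff k = ∑ j ∈ Finset.range (n + 1),
      Q.eval (v j) * (Lagrange.basis (Finset.range (n + 1)) v j).coeff k := by
    conv_lhs => rw [hQ]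
    rw [Lagrange.interpolate_apply, Polynomial.finset_sum_coeff]
    exact Finset.sum_congr rfl fun j _ => Polynomial.coeff_C_mul _
  rw [hco]
  calc |∑ j ∈ Finset.range (n + 1),
        Q.eval (v j) * (Lagrange.basis (Finset.range (n + 1)) v j).coeff k|
      ≤ ∑ j ∈ Finset.range (n + 1),
        |Q.eval (v j) * (Lagrange.basis (Finset.range (n + 1)) v j).coeff k| :=
        Finset.abs_sum_le_sum_abs _ _
    _ ≤ ∑ _j ∈ Finset.range (n + 1), M * (2 * n : ℝ) ^ n := by
        refine Finset.sum_le_sum fun j hj => ?_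
        rw [abs_mul]
        exact mul_le_mul (hval j hj) (hbasis j hj) (abs_nonneg _) hM0
    _ = (n + 1 : ℝ) * (2 * n : ℝ) ^ n * M := by
        rw [Finset.sum_const, Finset.card_range, nsmul_eq_mul]
        push_cast
        ring

lemma eval_mul_of_isHomogeneous {d m : ℕ} (p : MvPolynomial (Fin d) ℝ)
    (hp : p.IsHomogeneous m) (r : ℝ) (x : Fin d → ℝ) :
    MvPolynomial.eval (fun i => r * x i) p = r ^ m * MvPolynomial.eval x p := by
  rw [MvPolynomial.eval_eq, MvPolynomial.eval_eq, Finset.mul_sum]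
  refine Finset.sum_congr rfl fun mo hmo => ?_
  have hcoeff : MvPolynomial.coeff mo p ≠ 0 := MvPolynomial.mem_support_iff.mp hmo
  have hdeg : (Finsupp.weight 1) mo = m := hp hcoeff
  have hdeg' : (∑ i ∈ mo.support, mo i) = m := by
    change Finsupp.weight (fun _ => 1) mo = m at hdeg
    rw [← Finsupp.degree_eq_weight_one] at hdeg
    exact hdeg
  have : (∏ i ∈ mo.support, (r * x i) ^ mo i)
      = r ^ m * ∏ i ∈ mo.support, x i ^ mo i := by
    rw [← hdeg', ← Finset.prod_pow_eq_pow_sum]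
    rw [← Finset.prod_mul_distrib]
    exact Finset.prod_congr rfl fun i _ => by rw [mul_pow]
  rw [this]
  ring

end Aux

/-- the sup norm over the sphere of each spherical-harmonic component of a
homogeneous polynomial `f` of degree `2n` is at most `(2n)!·(1+(2n)!)^n` times the sup norm
of `f`; in particular the bound does not depend on the dimension `d`. -/
theorem stmt_3 (n d : ℕ) (hn : 0 < n) (hd : 0 < d)
    (f : MvPolynomial (Fin d) ℝ) (hf : f.IsHomogeneous (2 * n))
    (g : ℕ → MvPolynomial (Fin d) ℝ) (hg : IsSHDecomp d n f g)
    (M : ℝ) (hM : ∀ x : Fin d → ℝ, (∑ i, x i ^ 2) = 1 → |MvPolynomial.eval x f| ≤ M) :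
    ∀ k, k ≤ n → ∀ x : Fin d → ℝ, (∑ i, x i ^ 2) = 1 →
      |MvPolynomial.eval x (g k)|
        ≤ (((2 * n).factorial : ℝ) * (1 + ((2 * n).factorial : ℝ)) ^ n) * M := by
  intro k hk x hx
  obtain ⟨hcomp, hdecomp⟩ := hg
  have hM0 : 0 ≤ M := le_trans (abs_nonneg _) (hM x hx)
  set H : MvPolynomial (Fin d) ℝ := ∑ j ∈ Finset.range (n + 1), g j with hH
  have hHlap : polyLap H = 0 := by
    rw [hH, polyLap_sum]
    exact Finset.sum_eq_zero fun j hj =>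
      (hcomp j (Nat.lt_succ_iff.mp (Finset.mem_range.mp hj))).2
  have hsphere : ∀ z : Fin d → ℝ, (∑ i, z i ^ 2) = 1 →
      MvPolynomial.eval z H = MvPolynomial.eval z f := by
    intro z hz
    rw [hdecomp z, hH, map_sum]
    exact Finset.sum_congr rfl fun j _ => by rw [hz, one_pow, one_mul]
  have habs : ∀ z : Fin d → ℝ, (∑ i, z i ^ 2) = 1 → |MvPolynomial.eval z H| ≤ M := by
    intro z hz
    rw [hsphere z hz]
    exact hM z hz
  have hball : ∀ y : Fin d → ℝ, (∑ i, y i ^ 2) ≤ 1 → |MvPolynomial.eval y H| ≤ M := by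
    intro y hy
    rw [abs_le]
    constructor
    · have hlapneg : polyLap (-H) = 0 := by
        have : (-H : MvPolynomial (Fin d) ℝ) = MvPolynomial.C (-1) * H := by
          rw [map_neg, map_one]; ring
        rw [this, polyLap_C_mul, hHlap, mul_zero]
      have := maxPrinciple hd (-H) hlapneg M
        (fun z hz => by
          rw [map_neg]
          linarith [(abs_le.mp (habs z hz)).1]) y hy
      rw [map_neg] at this
      linarith
    · exact maxPrinciple hd H hHlap M (fun z hz => (abs_le.mp (habs z hz)).2) y hy
  set c : ℕ → ℝ := fun j => MvPolynomial.eval x (g j) with hc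
  set Q : Polynomial ℝ := ∑ j ∈ Finset.range (n + 1), Polynomial.C (c j) * Polynomial.X ^ j
    with hQ
  have hQdeg : Q.degree < (n + 1 : ℕ) := by
    rw [hQ]
    refine lt_of_le_of_lt (Polynomial.degree_sum_le _ _) ?_
    rw [Finset.sup_lt_iff (by exact_mod_cast WithBot.bot_lt_coe (n + 1))]
    intro j hj
    refine lt_of_le_of_lt (Polynomial.degree_C_mul_X_pow_le _ _) ?_
    exact_mod_cast Finset.mem_range.mp hj
  have hQeval : ∀ t : ℝ, 0 ≤ t → Q.eval t
      = MvPolynomial.eval (fun i => Real.sqrt t * x i) H := by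
    intro t ht0
    rw [hH, map_sum, hQ, Polynomial.eval_finset_sum]
    refine Finset.sum_congr rfl fun j hj => ?_
    have hhom := (hcomp j (Nat.lt_succ_iff.mp (Finset.mem_range.mp hj))).1
    rw [eval_mul_of_isHomogeneous (g j) hhom (Real.sqrt t) x]
    rw [pow_mul, Real.sq_sqrt ht0]
    simp [hc]
    ring
  have hQval : ∀ j ∈ Finset.range (n + 1), |Q.eval ((j : ℝ) / n)| ≤ M := by
    intro j hj
    have hjn : j ≤ n := Nat.lt_succ_iff.mp (Finset.mem_range.mp hj)
    have ht0 : (0:ℝ) ≤ (j : ℝ) / n := by positivity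
    have ht1 : (j : ℝ) / n ≤ 1 := by
      rw [div_le_one (by exact_mod_cast hn)]
      exact_mod_cast hjn
    rw [hQeval _ ht0]
    apply hball
    have : (∑ i, (Real.sqrt ((j:ℝ)/n) * x i) ^ 2) = (j:ℝ)/n := by
      have : ∀ i : Fin d, (Real.sqrt ((j:ℝ)/n) * x i) ^ 2 = ((j:ℝ)/n) * x i ^ 2 := by
        intro i
        rw [mul_pow, Real.sq_sqrt ht0]
      rw [Finset.sum_congr rfl fun i _ => this i, ← Finset.mul_sum, hx, mul_one]
    rw [this]
    exact ht1
  have hcoQ : Q.coeff k = c k := by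
    rw [hQ, Polynomial.finset_sum_coeff]
    rw [Finset.sum_eq_single_of_mem k (Finset.mem_range.2 (Nat.lt_succ_iff.2 hk))]
    · rw [Polynomial.coeff_C_mul, Polynomial.coeff_X_pow, if_pos rfl, mul_one]
    · intro j _ hjk
      rw [Polynomial.coeff_C_mul, Polynomial.coeff_X_pow, if_neg (Ne.symm hjk), mul_zero]
  have hbound : |c k| ≤ (n + 1 : ℝ) * (2 * n : ℝ) ^ n * M := by
    rw [← hcoQ]
    exact coeff_bound_of_values n hn Q hQdeg M hQval k
  refine le_trans hbound ?_
  have hfac1 : (n + 1 : ℝ) ≤ ((2 * n).factorial : ℝ) := by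
    have h1 : n + 1 ≤ (n + 1).factorial := Nat.self_le_factorial _
    have h2 : (n + 1).factorial ≤ (2 * n).factorial := Nat.factorial_le (by omega)
    exact_mod_cast le_trans h1 h2
  have hfac2 : ((2 * n : ℝ)) ^ n ≤ (1 + ((2 * n).factorial : ℝ)) ^ n := by
    apply pow_le_pow_left₀ (by positivity)
    have : 2 * n ≤ (2 * n).factorial := Nat.self_le_factorial _
    have : (2 * n : ℝ) ≤ ((2 * n).factorial : ℝ) := by exact_mod_cast this
    linarith
  have hmain : (n + 1 : ℝ) * (2 * n : ℝ) ^ n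
      ≤ ((2 * n).factorial : ℝ) * (1 + ((2 * n).factorial : ℝ)) ^ n :=
    mul_le_mul hfac1 hfac2 (by positivity) (by positivity)
  calc (n + 1 : ℝ) * (2 * n : ℝ) ^ n * M
      ≤ ((2 * n).factorial : ℝ) * (1 + ((2 * n).factorial : ℝ)) ^ n * M :=
        mul_le_mul_of_nonneg_right hmain hM0
    _ = _ := rfl
end

section
/- Let d ≥ 2 and i ≥ 1 be integers, and let C be a real polynomial of degree i with C(1) > 0 such that ∫_{−1}^1 C(t) g(t) (1−t²)^{(d−3)/2} dt = 0 for every real polynomial g of degree less than i. Then the graph of C lies above its tangent line at t = 1 on [−1,1]: C(t) ≥ C'(1)·(t−1) + C(1) for all t ∈ [−1,1]. -/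
open MeasureTheory Set Polynomial
open scoped Real

set_option maxHeartbeats 1000000
set_option maxRecDepth 100000

noncomputable section

/-- The weight is integrable. -/
lemma stmt8_w_int {e : ℝ} (he : -1 < e) :
    IntegrableOn (fun t : ℝ => (1 - t^2) ^ e) (Set.Ioo (-1 : ℝ) 1) := by
  have hconOn : ContinuousOn (fun t : ℝ => (1 - t^2) ^ e) (Set.Ioo (-1 : ℝ) 1) := by
    intro t ht
    apply ContinuousWithinAt.rpow_const
    · exact (by fun_prop : Continuous fun t : ℝ => 1 - t^2).continuousWithinAt
    · left
      nlinarith [ht.1, ht.2]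
  rcases le_or_gt 0 e with he0 | he0
  · have hc : Continuous fun t : ℝ => (1 - t^2) ^ e := by
      apply Continuous.rpow_const (by continuity)
      intro x; exact Or.inr he0
    exact (hc.integrableOn_Icc (a := -1) (b := 1)).mono_set Set.Ioo_subset_Icc_self
  · -- e < 0 : dominate by (1+t)^e + (1-t)^e
    have h0 : IntervalIntegrable (fun x : ℝ => x ^ e) volume 0 2 :=
      intervalIntegral.intervalIntegrable_rpow' he
    have I1 : IntegrableOn (fun t : ℝ => (1 + t) ^ e) (Set.Ioo (-1 : ℝ) 1) := by
      have h1 := h0.comp_add_right 1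
      rw [show (0:ℝ)-1 = -1 by norm_num, show (2:ℝ)-1 = 1 by norm_num] at h1
      rw [intervalIntegrable_iff_integrableOn_Ioo_of_le (by norm_num : (-1:ℝ) ≤ 1)] at h1
      exact h1.congr_fun (fun t ht => by rw [add_comm]) measurableSet_Ioo
    have I2 : IntegrableOn (fun t : ℝ => (1 - t) ^ e) (Set.Ioo (-1 : ℝ) 1) := by
      have h1 := (h0.comp_sub_left 1).symm
      rw [show (1:ℝ)-0 = 1 by norm_num, show (1:ℝ)-2 = -1 by norm_num] at h1
      rwa [intervalIntegrable_iff_integrableOn_Ioo_of_le (by norm_num : (-1:ℝ) ≤ 1)] at h1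
    apply Integrable.mono' (I1.add I2) (hconOn.aestronglyMeasurable measurableSet_Ioo)
    rw [MeasureTheory.ae_restrict_iff' measurableSet_Ioo]
    filter_upwards with t ht
    have h1t : (0:ℝ) < 1 + t := by linarith [ht.1]
    have h2t : (0:ℝ) < 1 - t := by linarith [ht.2]
    have hsplit : (1 - t^2 : ℝ) ^ e = (1 - t) ^ e * (1 + t) ^ e := by
      rw [← Real.mul_rpow h2t.le h1t.le]; ring_nf
    have hn1 : (0:ℝ) ≤ (1 + t) ^ e := Real.rpow_nonneg h1t.le e
    have hn2 : (0:ℝ) ≤ (1 - t) ^ e := Real.rpow_nonneg h2t.le e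
    rw [Real.norm_eq_abs, abs_of_nonneg (by rw [hsplit]; positivity)]
    rcases le_total t 0 with hts | hts
    · have : (1 - t : ℝ) ^ e ≤ 1 :=
        Real.rpow_le_one_of_one_le_of_nonpos (by linarith) he0.le
      rw [hsplit]
      simp only [Pi.add_apply]
      nlinarith
    · have : (1 + t : ℝ) ^ e ≤ 1 :=
        Real.rpow_le_one_of_one_le_of_nonpos (by linarith) he0.le
      rw [hsplit]
      simp only [Pi.add_apply]
      nlinarith

/-- polynomial × weight is integrable. -/
lemma stmt8_pw_int (p : Polynomial ℝ) {e : ℝ} (he : -1 < e) :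
    IntegrableOn (fun t : ℝ => p.eval t * (1 - t^2) ^ e) (Set.Ioo (-1 : ℝ) 1) := by
  obtain ⟨M, hM⟩ : ∃ M, ∀ t ∈ Set.Icc (-1:ℝ) 1, |p.eval t| ≤ M := by
    obtain ⟨M, hM⟩ := (isCompact_Icc (a := (-1:ℝ)) (b := 1)).exists_bound_of_continuousOn
      (p.continuous_aeval.continuousOn (s := Set.Icc (-1) 1))
    exact ⟨M, fun t ht => by simpa using hM t ht⟩
  have hcon : ContinuousOn (fun t : ℝ => p.eval t * (1 - t^2) ^ e) (Set.Ioo (-1 : ℝ) 1) := by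
    apply (p.continuous_aeval.continuousOn).mul
    intro t ht
    apply ContinuousWithinAt.rpow_const
    · exact (by fun_prop : Continuous fun t : ℝ => 1 - t^2).continuousWithinAt
    · left; nlinarith [ht.1, ht.2]
  apply Integrable.mono' ((stmt8_w_int he).const_mul M) (hcon.aestronglyMeasurable measurableSet_Ioo)
  rw [MeasureTheory.ae_restrict_iff' measurableSet_Ioo]
  filter_upwards with t ht
  have hw : (0:ℝ) ≤ (1 - t^2) ^ e := Real.rpow_nonneg (by nlinarith [ht.1, ht.2]) e
  rw [Real.norm_eq_abs, abs_mul, abs_of_nonneg hw]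
  exact mul_le_mul_of_nonneg_right (hM t (Set.Ioo_subset_Icc_self ht)) hw

/-- The basic integral functional. -/
def Jint (e : ℝ) (q : Polynomial ℝ) : ℝ :=
  ∫ t in Set.Ioo (-1 : ℝ) 1, q.eval t * (1 - t^2) ^ e

lemma Jint_add {e : ℝ} (he : -1 < e) (p q : Polynomial ℝ) :
    Jint e (p + q) = Jint e p + Jint e q := by
  simp only [Jint, eval_add, add_mul]
  exact integral_add (stmt8_pw_int p he) (stmt8_pw_int q he)

lemma Jint_Cmul (e : ℝ) (c : ℝ) (q : Polynomial ℝ) :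
    Jint e (Polynomial.C c * q) = c * Jint e q := by
  simp only [Jint, eval_mul, eval_C, mul_assoc]
  exact integral_const_mul c _

lemma Jint_sub {e : ℝ} (he : -1 < e) (p q : Polynomial ℝ) :
    Jint e (p - q) = Jint e p - Jint e q := by
  have h := Jint_add he (p - q) q
  simp only [sub_add_cancel] at h
  linarith

lemma Jint_smul (e : ℝ) (c : ℝ) (q : Polynomial ℝ) :
    Jint e (c • q) = c * Jint e q := by
  rw [Polynomial.smul_eq_C_mul, Jint_Cmul]

lemma Jint_shift (e : ℝ) (q : Polynomial ℝ) :
    Jint (e + 1) q = Jint e ((1 - X^2) * q) := by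
  apply MeasureTheory.setIntegral_congr_fun measurableSet_Ioo
  intro t ht
  have hpos : (0:ℝ) < 1 - t^2 := by nlinarith [ht.1, ht.2]
  simp only [eval_mul, eval_sub, eval_one, eval_pow, eval_X]
  rw [Real.rpow_add_one hpos.ne']
  ring

/-- Integration by parts: the integral of the total derivative of `(1-t²)^{e+1} q(t)` vanishes. -/
lemma stmt8_ibp {e : ℝ} (he : -1 < e) (q : Polynomial ℝ) :
    Jint e ((1 - X^2) * derivative q - Polynomial.C (2*(e+1)) * X * q) = 0 := by
  have he1 : 0 < e + 1 := by linarith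
  set p : Polynomial ℝ := (1 - X^2) * derivative q - Polynomial.C (2*(e+1)) * X * q with hp
  set F : ℝ → ℝ := fun t => (1 - t^2)^(e+1) * q.eval t with hF
  have hcontF : ContinuousOn F (Set.Icc (-1:ℝ) 1) := by
    apply Continuous.continuousOn
    exact (Continuous.rpow_const (by continuity) (fun x => Or.inr he1.le)).mul
      (Polynomial.continuous q)
  have hderiv : ∀ t ∈ Set.Ioo (-1:ℝ) 1,
      HasDerivAt F (p.eval t * (1 - t^2)^e) t := by
    intro t ht
    have hpos : (0:ℝ) < 1 - t^2 := by nlinarith [ht.1, ht.2]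
    have h1 : HasDerivAt (fun t : ℝ => 1 - t^2) (-(2*t)) t := by
      simpa using ((hasDerivAt_pow 2 t).const_sub 1)
    have h2 := h1.rpow_const (p := e + 1) (Or.inl hpos.ne')
    have h3 := h2.mul (q.hasDerivAt t)
    refine h3.congr_deriv ?_
    have : e + 1 - 1 = e := by ring
    rw [this, Real.rpow_add_one hpos.ne']
    simp only [hp, eval_mul, eval_sub, eval_one, eval_pow, eval_X, eval_C]
    ring
  have hint : IntervalIntegrable (fun t => p.eval t * (1 - t^2)^e) volume (-1) 1 := by
    rw [intervalIntegrable_iff_integrableOn_Ioo_of_le (by norm_num : (-1:ℝ) ≤ 1)]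
    exact stmt8_pw_int p he
  have key := intervalIntegral.integral_eq_sub_of_hasDeriv_right_of_le (by norm_num : (-1:ℝ) ≤ 1)
    hcontF (fun t ht => (hderiv t ht).hasDerivWithinAt) hint
  have hF1 : F 1 = 0 := by
    simp only [hF]
    norm_num
    exact Or.inl (Real.zero_rpow he1.ne')
  have hFm1 : F (-1) = 0 := by
    simp only [hF]
    norm_num
    exact Or.inl (Real.zero_rpow he1.ne')
  rw [hF1, hFm1, sub_zero] at key
  rw [intervalIntegral.integral_of_le (by norm_num : (-1:ℝ) ≤ 1),
    MeasureTheory.integral_Ioc_eq_integral_Ioo] at key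
  exact key

/-- If the square integral vanishes, the polynomial is zero. -/
lemma stmt8_vanish {e : ℝ} (he : -1 < e) {q : Polynomial ℝ} (hq : Jint e (q*q) = 0) :
    q = 0 := by
  by_contra hq0
  set f : ℝ → ℝ := fun t => (q*q).eval t * (1 - t^2)^e with hf
  have hnonneg : 0 ≤ᵐ[volume.restrict (Set.Ioo (-1:ℝ) 1)] f := by
    rw [Filter.EventuallyLE, ae_restrict_iff' measurableSet_Ioo]
    filter_upwards with t ht
    have hw : (0:ℝ) ≤ (1 - t^2) ^ e :=
      Real.rpow_nonneg (by nlinarith [ht.1, ht.2]) e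
    simp only [hf, eval_mul, Pi.zero_apply]
    nlinarith [mul_self_nonneg (q.eval t)]
  have h0 : f =ᵐ[volume.restrict (Set.Ioo (-1:ℝ) 1)] 0 :=
    (integral_eq_zero_iff_of_nonneg_ae hnonneg (stmt8_pw_int (q*q) he)).mp hq
  have hnull : volume ({x | ¬ f x = 0} ∩ Set.Ioo (-1:ℝ) 1) = 0 := by
    have := MeasureTheory.ae_iff.mp h0
    rwa [Measure.restrict_apply' measurableSet_Ioo] at this
  have hsub : Set.Ioo (-1:ℝ) 1 \ {x | q.IsRoot x} ⊆ {x | ¬ f x = 0} ∩ Set.Ioo (-1:ℝ) 1 := by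
    intro t ⟨ht, hroot⟩
    refine ⟨?_, ht⟩
    have hw : (0:ℝ) < (1 - t^2) ^ e :=
      Real.rpow_pos_of_pos (by nlinarith [ht.1, ht.2]) e
    have hq2 : (0:ℝ) < q.eval t * q.eval t := by
      rcases lt_or_gt_of_ne (show q.eval t ≠ 0 from hroot) with h | h
      · nlinarith
      · nlinarith
    simp only [Set.mem_setOf_eq, hf, eval_mul]
    positivity
  have hdiff : volume (Set.Ioo (-1:ℝ) 1 \ {x | q.IsRoot x}) = 0 :=
    measure_mono_null hsub hnull
  have hroots : volume {x | q.IsRoot x} = 0 :=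
    Set.Finite.measure_zero (q.finite_setOf_isRoot hq0) volume
  have : volume (Set.Ioo (-1:ℝ) 1) = 0 := by
    have := measure_diff_null (s := Set.Ioo (-1:ℝ) 1) hroots
    rw [this] at hdiff
    exact hdiff
  rw [Real.volume_Ioo] at this
  norm_num at this

/-- The Sturm–Liouville type operator. -/
def Sop (e μ : ℝ) (q : Polynomial ℝ) : Polynomial ℝ :=
  (1 - X^2) * derivative (derivative q) - Polynomial.C (2*(e+1)) * X * derivative q
    + Polynomial.C μ * q

lemma coeff_Sop (e μ : ℝ) (q : Polynomial ℝ) (m : ℕ) :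
    (Sop e μ q).coeff m
      = ((m:ℝ)+1)*((m:ℝ)+2) * q.coeff (m+2) + (μ - (m:ℝ)*((m:ℝ) + 2*e + 1)) * q.coeff m := by
  have hder2 : ∀ (k : ℕ), (derivative (derivative q)).coeff k
      = q.coeff (k+2) * (((k:ℝ)+1) * ((k:ℝ)+2)) := by
    intro k
    rw [coeff_derivative, coeff_derivative]
    push_cast
    ring
  have hE : Sop e μ q = derivative (derivative q) - derivative (derivative q) * X^2
      - Polynomial.C (2*(e+1)) * (derivative q * X^1) + Polynomial.C μ * q := by
    unfold Sop; ring
  rw [hE]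
  simp only [coeff_add, coeff_sub, coeff_C_mul, coeff_mul_X_pow']
  rcases m with _ | m
  · norm_num
    rw [hder2 0]
    push_cast
    ring
  · rcases m with _ | k
    · norm_num
      rw [hder2 1, coeff_derivative]
      push_cast
      ring
    · have h2 : 2 ≤ k + 1 + 1 := by omega
      have h1 : 1 ≤ k + 1 + 1 := by omega
      rw [if_pos h2, if_pos h1]
      have e2 : k + 1 + 1 - 2 = k := by omega
      have e1 : k + 1 + 1 - 1 = k + 1 := by omega
      rw [e2, e1, hder2 (k+1+1), hder2 k, coeff_derivative]
      push_cast
      ring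

lemma degree_Sop_lt (e μ : ℝ) (q : Polynomial ℝ) (n : ℕ)
    (hq : ∀ m : ℕ, n < m → q.coeff m = 0)
    (hext : (μ - (n:ℝ)*((n:ℝ) + 2*e + 1)) * q.coeff n = 0) :
    (Sop e μ q).degree < (n : WithBot ℕ) := by
  rw [Polynomial.degree_lt_iff_coeff_zero]
  intro m hm
  rw [coeff_Sop, hq (m+2) (by omega)]
  rcases eq_or_lt_of_le hm with h | h
  · rw [← h, hext]
    ring
  · rw [hq m h]
    ring

/-- Orthogonal polynomials satisfy the Sturm–Liouville ODE. -/
theorem stmt8_ode {e : ℝ} (he : -1 < e) (P : Polynomial ℝ) (n : ℕ)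
    (hdeg : P.degree = (n : WithBot ℕ))
    (horth : ∀ g : Polynomial ℝ, g.degree < (n : WithBot ℕ) → Jint e (P * g) = 0) :
    Sop e ((n:ℝ)*((n:ℝ)+2*e+1)) P = 0 := by
  set μ : ℝ := (n:ℝ)*((n:ℝ)+2*e+1) with hμ
  have hPco : ∀ m : ℕ, n < m → P.coeff m = 0 := by
    intro m hm
    exact coeff_eq_zero_of_degree_lt (hdeg ▸ (by exact_mod_cast hm))
  have key : ∀ g : Polynomial ℝ, g.degree < (n : WithBot ℕ) → Jint e ((Sop e μ P) * g) = 0 := by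
    intro g hg
    have hgco : ∀ m : ℕ, n ≤ m → g.coeff m = 0 := by
      intro m hm
      exact coeff_eq_zero_of_degree_lt (lt_of_lt_of_le hg (by exact_mod_cast hm))
    -- orthogonality against the image of g
    have hBdeg : (Sop e 0 g).degree < (n : WithBot ℕ) :=
      degree_Sop_lt e 0 g n (fun m hm => hgco m hm.le) (by rw [hgco n le_rfl]; ring)
    have h3 : Jint e (P * Sop e 0 g) = 0 := horth _ hBdeg
    -- integration by parts, twice
    have h1 := stmt8_ibp he (derivative P * g)
    rw [show (1 - X^2) * derivative (derivative P * g)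
          - Polynomial.C (2*(e+1)) * X * (derivative P * g)
        = ((1 - X^2) * derivative (derivative P)
            - Polynomial.C (2*(e+1)) * X * derivative P) * g
          + (1 - X^2) * derivative P * derivative g from by
      rw [derivative_mul]; ring] at h1
    rw [Jint_add he] at h1
    have h2 := stmt8_ibp he (derivative g * P)
    rw [show (1 - X^2) * derivative (derivative g * P)
          - Polynomial.C (2*(e+1)) * X * (derivative g * P)
        = P * Sop e 0 g + (1 - X^2) * derivative P * derivative g from by
      rw [derivative_mul]; unfold Sop; simp only [map_zero, zero_mul, add_zero]; ring] at h2
    rw [Jint_add he, h3, zero_add] at h2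
    -- combine
    rw [show Sop e μ P * g
        = ((1 - X^2) * derivative (derivative P)
            - Polynomial.C (2*(e+1)) * X * derivative P) * g
          + Polynomial.C μ * (P * g) from by unfold Sop; ring]
    rw [Jint_add he, Jint_Cmul, horth g hg, mul_zero, add_zero]
    linarith
  have hSdeg : (Sop e μ P).degree < (n : WithBot ℕ) :=
    degree_Sop_lt e μ P n hPco (by rw [hμ]; ring)
  exact stmt8_vanish he (key _ hSdeg)

lemma coeff_comp_neg_X (p : Polynomial ℝ) (m : ℕ) :
    (p.comp (-X)).coeff m = (-1)^m * p.coeff m := by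
  induction p using Polynomial.induction_on' with
  | add p q hp hq => simp [add_comp, hp, hq, mul_add]
  | monomial k a =>
    rw [monomial_comp]
    have hnp : (-X : Polynomial ℝ)^k = Polynomial.C ((-1:ℝ)^k) * X^k := by
      rw [neg_pow]
      congr 1
      rw [map_pow, map_neg, map_one]
    rw [hnp, coeff_monomial, mul_left_comm, coeff_C_mul, coeff_C_mul, coeff_X_pow]
    by_cases h : k = m
    · subst h
      simp [mul_comm]
    · simp only [if_neg h, if_neg (show ¬ m = k from fun h' => h h'.symm), mul_zero, zero_mul]

lemma Jint_reflect (e : ℝ) (q : Polynomial ℝ) :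
    Jint e (q.comp (-X)) = Jint e q := by
  have h1 : Jint e (q.comp (-X)) = ∫ t in Set.Ioo (-1:ℝ) 1, q.eval (-t) * (1 - t^2) ^ e := by
    apply MeasureTheory.setIntegral_congr_fun measurableSet_Ioo
    intro t ht
    simp [eval_comp]
  rw [h1, Jint]
  rw [← MeasureTheory.integral_Ioc_eq_integral_Ioo,
    ← MeasureTheory.integral_Ioc_eq_integral_Ioo,
    ← intervalIntegral.integral_of_le (by norm_num : (-1:ℝ) ≤ 1),
    ← intervalIntegral.integral_of_le (by norm_num : (-1:ℝ) ≤ 1)]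
  have := intervalIntegral.integral_comp_neg (a := (-1:ℝ)) (b := 1)
    (f := fun t => q.eval t * (1 - t^2) ^ e)
  simp only [neg_neg] at this
  rw [← this]
  apply intervalIntegral.integral_congr
  intro t ht
  simp [neg_sq]

/-- Orthogonal polynomials for the symmetric weight have parity; in particular the
values at `±1` agree up to sign. -/
theorem stmt8_parity {e : ℝ} (he : -1 < e) (P : Polynomial ℝ) (n : ℕ)
    (hdeg : P.degree = (n : WithBot ℕ))
    (horth : ∀ g : Polynomial ℝ, g.degree < (n : WithBot ℕ) → Jint e (P * g) = 0) :
    P.eval (-1) ^ 2 = P.eval 1 ^ 2 := by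
  set D : Polynomial ℝ := P - ((-1:ℝ)^n) • (P.comp (-X)) with hD
  have hPco : ∀ m : ℕ, n < m → P.coeff m = 0 := by
    intro m hm
    exact coeff_eq_zero_of_degree_lt (hdeg ▸ (by exact_mod_cast hm))
  have hDdeg : D.degree < (n : WithBot ℕ) := by
    rw [Polynomial.degree_lt_iff_coeff_zero]
    intro m hm
    rw [hD, coeff_sub, coeff_smul, coeff_comp_neg_X]
    rcases eq_or_lt_of_le hm with h | h
    · rw [← h]
      have : ((-1:ℝ)^n) • ((-1:ℝ)^n * P.coeff n) = P.coeff n := by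
        rw [smul_eq_mul, ← mul_assoc, ← mul_pow]
        norm_num
      rw [this, sub_self]
    · rw [hPco m h]
      simp
  have hcompdeg : ∀ g : Polynomial ℝ, (g.comp (-X)).degree ≤ g.degree := by
    intro g
    rw [Polynomial.degree_le_iff_coeff_zero]
    intro m hm
    rcases lt_or_ge g.degree (m : WithBot ℕ) with h | h
    · rw [coeff_comp_neg_X, coeff_eq_zero_of_degree_lt h, mul_zero]
    · exact absurd (lt_of_le_of_lt h hm) (lt_irrefl _)
  have hreflorth : ∀ g : Polynomial ℝ, g.degree < (n : WithBot ℕ) →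
      Jint e (P.comp (-X) * g) = 0 := by
    intro g hg
    have hkey : P.comp (-X) * g = (P * g.comp (-X)).comp (-X) := by
      rw [mul_comp, comp_assoc]
      simp
    rw [hkey, Jint_reflect]
    exact horth _ (lt_of_le_of_lt (hcompdeg g) hg)
  have hDorth : ∀ g : Polynomial ℝ, g.degree < (n : WithBot ℕ) → Jint e (D * g) = 0 := by
    intro g hg
    rw [hD, sub_mul, Jint_sub he, smul_mul_assoc, Jint_smul, horth g hg,
      hreflorth g hg, mul_zero, sub_zero]
  have hD0 : D = 0 := stmt8_vanish he (hDorth D hDdeg)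
  have hPP : P = ((-1:ℝ)^n) • (P.comp (-X)) := by
    have := sub_eq_zero.mp hD0
    linear_combination (norm := ring_nf) this
  have heval : P.eval (-1) = (-1:ℝ)^n * P.eval 1 := by
    conv_lhs => rw [hPP]
    simp [eval_comp]
  rw [heval, mul_pow, ← pow_mul, mul_comm n 2, pow_mul]
  norm_num

lemma degree_B_lt (c : ℝ) (g : Polynomial ℝ) (n : ℕ) (hn : 1 ≤ n)
    (hg : ∀ m : ℕ, n ≤ m → g.coeff m = 0) :
    ((1 - X^2) * derivative g - Polynomial.C c * X * g).degree < ((n+1 : ℕ) : WithBot ℕ) := by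
  rw [Polynomial.degree_lt_iff_coeff_zero]
  intro m hm
  obtain ⟨k, rfl⟩ : ∃ k, m = k + 2 := ⟨m - 2, by omega⟩
  have hE : (1 - X^2) * derivative g - Polynomial.C c * X * g
      = derivative g - derivative g * X^2 - Polynomial.C c * (g * X^1) := by ring
  rw [hE]
  simp only [coeff_sub, coeff_C_mul, coeff_mul_X_pow']
  rw [if_pos (by omega : 2 ≤ k+2), if_pos (by omega : 1 ≤ k+2)]
  have e2 : k + 2 - 2 = k := by omega
  have e1 : k + 2 - 1 = k + 1 := by omega
  rw [e2, e1, coeff_derivative, coeff_derivative, hg (k+2+1) (by omega), hg (k+1) (by omega)]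
  ring

/-- let `C` be (a positive multiple of) the degree-`i` Gegenbauer polynomial for
the weight `(1-t²)^{(d-3)/2}` on `[-1,1]`, i.e. a degree-`i` polynomial with `C(1) > 0`
orthogonal to all polynomials of lower degree. Then the graph of `C` lies above its tangent
line at `t = 1` on `[-1,1]`. -/
theorem stmt_8 (d i : ℕ) (hd : 2 ≤ d) (hi : 1 ≤ i)
    (C : Polynomial ℝ) (hdeg : C.degree = (i : WithBot ℕ)) (hC1 : 0 < C.eval 1)
    (horth : ∀ g : Polynomial ℝ, g.degree < (i : WithBot ℕ) →
      (∫ t in Set.Ioo (-1 : ℝ) 1,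
        C.eval t * g.eval t * (1 - t ^ 2) ^ (((d : ℝ) - 3) / 2)) = 0) :
    ∀ t ∈ Set.Icc (-1 : ℝ) 1,
      (Polynomial.derivative C).eval 1 * (t - 1) + C.eval 1 ≤ C.eval t := by
  have hd2 : (2:ℝ) ≤ (d:ℝ) := by exact_mod_cast hd
  have hi1 : (1:ℝ) ≤ (i:ℝ) := by exact_mod_cast hi
  set α : ℝ := ((d:ℝ) - 3) / 2 with hαdef
  have hα : -1 < α := by rw [hαdef]; linarith
  have hα1 : 0 < α + 1 := by rw [hαdef]; linarith
  have hα21 : 0 ≤ 2*α + 1 := by rw [hαdef]; linarith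
  -- J-form of the orthogonality assumption
  have horthJ : ∀ g : Polynomial ℝ, g.degree < (i : WithBot ℕ) → Jint α (C * g) = 0 := by
    intro g hg
    rw [Jint, ← horth g hg]
    apply MeasureTheory.setIntegral_congr_fun measurableSet_Ioo
    intro t ht
    simp only [eval_mul, mul_assoc]
  have hCnd : C.natDegree = i := natDegree_eq_of_degree_eq_some hdeg
  -- the ODE for C and positivity of C'(1)
  have hodeC := stmt8_ode hα C i hdeg horthJ
  have hCp1 : 0 < (derivative C).eval 1 := by
    have h1 := congrArg (Polynomial.eval 1) hodeC
    simp only [Sop, eval_add, eval_sub, eval_mul, eval_one, eval_pow, eval_X, eval_C,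
      eval_zero] at h1
    have hμ : (0:ℝ) < (i:ℝ)*((i:ℝ)+2*α+1) := by nlinarith
    nlinarith [h1, hC1, hμ, hα1]
  -- the key bound : C' ≤ C'(1) on [-1,1]
  have hbound : ∀ t ∈ Set.Icc (-1:ℝ) 1, (derivative C).eval t ≤ (derivative C).eval 1 := by
    rcases eq_or_lt_of_le hi with h1 | h2
    · -- i = 1 : C' is constant
      have hnd : (derivative C).natDegree = 0 := by
        have := Polynomial.natDegree_derivative_le C
        omega
      obtain ⟨a, ha⟩ := Polynomial.natDegree_eq_zero.mp hnd
      intro t ht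
      rw [← ha]
      simp
    · -- i ≥ 2
      set P : Polynomial ℝ := derivative C with hPdef
      set n : ℕ := i - 1 with hndef
      have hn1 : 1 ≤ n := by omega
      have hni : n + 1 = i := by omega
      have hnr : (1:ℝ) ≤ (n:ℝ) := by exact_mod_cast hn1
      have hPdeg : P.degree = (n : WithBot ℕ) := by
        rw [hPdef, Polynomial.degree_derivative_eq C (by omega), hCnd]
      have horthP : ∀ g : Polynomial ℝ, g.degree < (n : WithBot ℕ) → Jint (α+1) (P * g) = 0 := by
        intro g hg
        have hgco : ∀ m : ℕ, n ≤ m → g.coeff m = 0 := by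
          intro m hm
          exact coeff_eq_zero_of_degree_lt (lt_of_lt_of_le hg (by exact_mod_cast hm))
        have hB : ((1 - X^2) * derivative g - Polynomial.C (2*(α+1)) * X * g).degree
            < (i : WithBot ℕ) := by
          have := degree_B_lt (2*(α+1)) g n hn1 hgco
          rwa [hni] at this
        have h1 := stmt8_ibp hα (C * g)
        rw [show (1 - X^2) * derivative (C * g) - Polynomial.C (2*(α+1)) * X * (C * g)
            = (1 - X^2) * (P * g)
              + C * ((1 - X^2) * derivative g - Polynomial.C (2*(α+1)) * X * g) from by
          rw [derivative_mul, hPdef]; ring] at h1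
        rw [Jint_add hα, horthJ _ hB, add_zero] at h1
        rw [Jint_shift α (P * g)]
        exact h1
      -- ODE for P
      have hodeP := stmt8_ode (by linarith : (-1:ℝ) < α + 1) P n hPdeg horthP
      set μ : ℝ := (n:ℝ)*((n:ℝ)+2*(α+1)+1) with hμdef
      have hμpos : 0 < μ := by rw [hμdef]; nlinarith
      -- parity
      have hpar := stmt8_parity (by linarith : (-1:ℝ) < α + 1) P n hPdeg horthP
      -- Sonin–Pólya monotonicity
      set V : Polynomial ℝ := Polynomial.C μ * P^2 + (1 - X^2) * (derivative P)^2 with hVdef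
      have hode' : (1 - X^2) * derivative (derivative P)
          = Polynomial.C (2*(α+1+1)) * X * derivative P - Polynomial.C μ * P := by
        unfold Sop at hodeP
        linear_combination hodeP
      have hV' : derivative V = Polynomial.C (2*(2*(α+1)+1)) * X * (derivative P)^2 := by
        rw [hVdef]
        rw [derivative_add, derivative_mul, derivative_mul, derivative_C, derivative_sub,
          derivative_one, derivative_X_pow, derivative_pow, derivative_pow]
        simp only [zero_mul, zero_add, zero_sub, Nat.cast_ofNat, pow_one]
        simp only [map_mul, map_add, map_one, map_ofNat] at hode' ⊢
        linear_combination (2 * derivative P) * hode'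
      have hVcont : ContinuousOn (fun t : ℝ => V.eval t) (Set.Icc (0:ℝ) 1) :=
        (Polynomial.continuous V).continuousOn
      have hVd : ∀ s : Set ℝ, DifferentiableOn ℝ (fun t : ℝ => V.eval t) s :=
        fun s => (Polynomial.differentiable V).differentiableOn
      have hderivV : ∀ x : ℝ, deriv (fun t : ℝ => V.eval t) x
          = (2*(2*(α+1)+1)) * x * ((derivative P).eval x)^2 := by
        intro x
        rw [Polynomial.deriv, hV']
        simp [eval_mul, eval_pow]
      have hcoef : (0:ℝ) < 2*(2*(α+1)+1) := by linarith
      have hmono1 : MonotoneOn (fun t : ℝ => V.eval t) (Set.Icc (0:ℝ) 1) := by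
        apply monotoneOn_of_deriv_nonneg (convex_Icc 0 1) hVcont (hVd _)
        intro x hx
        rw [interior_Icc] at hx
        rw [hderivV]
        exact mul_nonneg (mul_nonneg hcoef.le hx.1.le) (sq_nonneg _)
      have hmono2 : AntitoneOn (fun t : ℝ => V.eval t) (Set.Icc (-1:ℝ) 0) := by
        apply antitoneOn_of_deriv_nonpos (convex_Icc (-1) 0)
          ((Polynomial.continuous V).continuousOn) (hVd _)
        intro x hx
        rw [interior_Icc] at hx
        rw [hderivV]
        nlinarith [mul_nonneg hcoef.le (sq_nonneg ((derivative P).eval x)), hx.2]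
      have hV1 : V.eval 1 = μ * (P.eval 1)^2 := by
        rw [hVdef]
        simp only [eval_add, eval_mul, eval_pow, eval_sub, eval_one, eval_X, eval_C]
        norm_num
      have hVm1 : V.eval (-1) = μ * (P.eval 1)^2 := by
        simp only [hVdef, eval_add, eval_mul, eval_pow, eval_sub, eval_one, eval_X, eval_C]
        rw [show P.eval (-1) ^ 2 = P.eval 1 ^ 2 from hpar]
        norm_num
      -- squared bound
      have hsq : ∀ t ∈ Set.Icc (-1:ℝ) 1, (P.eval t)^2 ≤ (P.eval 1)^2 := by
        intro t ht
        have hVlow : μ * (P.eval t)^2 ≤ V.eval t := by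
          simp only [hVdef, eval_add, eval_mul, eval_pow, eval_sub, eval_one, eval_X, eval_C]
          have h1t : (0:ℝ) ≤ 1 - t^2 := by nlinarith [ht.1, ht.2]
          nlinarith [mul_nonneg h1t (sq_nonneg ((derivative P).eval t))]
        have hVup : V.eval t ≤ μ * (P.eval 1)^2 := by
          rcases le_total t 0 with h | h
          · have h1 : V.eval t ≤ V.eval (-1) :=
              hmono2 (Set.mem_Icc.mpr ⟨le_refl _, by norm_num⟩)
                (Set.mem_Icc.mpr ⟨ht.1, h⟩) ht.1
            rw [hVm1] at h1
            exact h1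
          · have h1 : V.eval t ≤ V.eval 1 :=
              hmono1 (Set.mem_Icc.mpr ⟨h, ht.2⟩)
                (Set.mem_Icc.mpr ⟨by norm_num, le_refl _⟩) ht.2
            rw [hV1] at h1
            exact h1
        nlinarith [hμpos]
      intro t ht
      have h := hsq t ht
      have hP1 : 0 < P.eval 1 := hCp1
      nlinarith [h, hP1]
  -- endgame : antitone tangent difference
  intro t ht
  set f : Polynomial ℝ := C - (Polynomial.C ((derivative C).eval 1) * (X - 1)
    + Polynomial.C (C.eval 1)) with hfdef
  have hfderiv : derivative f = derivative C - Polynomial.C ((derivative C).eval 1) := by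
    rw [hfdef]
    rw [derivative_sub, derivative_add, derivative_mul, derivative_C, derivative_sub,
      derivative_X, derivative_one, derivative_C]
    ring
  have hanti : AntitoneOn (fun s : ℝ => f.eval s) (Set.Icc (-1:ℝ) 1) := by
    apply antitoneOn_of_deriv_nonpos (convex_Icc (-1) 1)
      ((Polynomial.continuous f).continuousOn)
      ((Polynomial.differentiable f).differentiableOn)
    intro x hx
    rw [interior_Icc] at hx
    rw [Polynomial.deriv, hfderiv]
    simp only [eval_sub, eval_C]
    have := hbound x (Set.mem_Icc.mpr ⟨hx.1.le, hx.2.le⟩)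
    linarith
  have h0 : f.eval 1 = 0 := by
    simp [hfdef]
  have h3 : f.eval 1 ≤ f.eval t := hanti ht (Set.mem_Icc.mpr ⟨by norm_num, le_refl 1⟩) ht.2
  have this := h3
  rw [h0] at this
  simp only [hfdef, eval_sub, eval_add, eval_mul, eval_C, eval_X, eval_one] at this
  linarith

end
end

section
/- Let G be a k×k symmetric-matrix-valued homogeneous polynomial of even degree 2n in d variables, and let ℓ ≥ n. Then G is ℓ-sos on S^{d−1} if and only if the matrix polynomial y ↦ ‖y‖^{2(ℓ−n)}·G(y) is a sum of squares, i.e. there exist finitely many k×k matrix-valued polynomials V_1, …, V_m such that ‖y‖^{2(ℓ−n)}·G(y) = Σ_j V_j(y) V_j(y)^T for all y ∈ ℝ^d. -/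
/-!
If `G = ∑ Uⱼ Uⱼᵀ` on the sphere with `deg Uⱼ ≤ ℓ`, split each `Uⱼ` into `Aⱼ`, the sum of its
homogeneous components whose degree has the parity of `ℓ`, and `Bⱼ`, the sum of the others. Since
`G` is even, averaging the identity at `x` and `-x` gives `G = ∑ (Aⱼ Aⱼᵀ + Bⱼ Bⱼᵀ)` on the sphere.
Padding the components of `Aⱼ` (resp. `Bⱼ`) with powers of `‖y‖²` turns them into forms of degree
`ℓ` (resp. `ℓ - 1`), so `‖y‖^{2(ℓ-n)} G` and `∑ Aⱼ Aⱼᵀ + ∑ᵢ (yᵢ Bⱼ)(yᵢ Bⱼ)ᵀ` are matrices of forms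
of degree `2ℓ` that agree on the sphere, hence everywhere.

Conversely, if `‖y‖^{2(ℓ-n)} G = ∑ Vⱼ Vⱼᵀ`, taking traces shows that `∑ (Vⱼ)ₐᵦ²` has degree `2ℓ`.
The top-degree components of a sum of real squares cannot cancel, so every `Vⱼ` has degree at most
`ℓ`, and on the sphere the identity reads `G = ∑ Vⱼ Vⱼᵀ`.
-/

open Matrix

def IsMatrixSosOnSphere (d k ℓ : ℕ)
    (F : Matrix (Fin k) (Fin k) (MvPolynomial (Fin d) ℝ)) : Prop :=
  ∃ (m : ℕ) (U : Fin m → Matrix (Fin k) (Fin k) (MvPolynomial (Fin d) ℝ)),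
    (∀ j a b, ((U j) a b).totalDegree ≤ ℓ) ∧
    ∀ x : Fin d → ℝ, (∑ i, x i ^ 2) = 1 →
      F.map (MvPolynomial.eval x)
        = ∑ j, (U j).map (MvPolynomial.eval x) * ((U j).map (MvPolynomial.eval x))ᵀ

open MvPolynomial Finset

theorem exists_eq_smul_of_sum_sq_eq_one {σ : Type*} [Fintype σ] [Nonempty σ] (y : σ → ℝ) :
    ∃ (r : ℝ) (x : σ → ℝ), ∑ i, x i ^ 2 = 1 ∧ y = r • x := by
  classical
  by_cases hy : y = 0
  · refine ⟨0, Pi.single (Classical.arbitrary σ) 1, ?_, by simp [hy]⟩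
    simp [Pi.single_apply, Finset.sum_ite_eq']
  · have hs : 0 < ∑ i, y i ^ 2 := by
      obtain ⟨i, hi⟩ : ∃ i, y i ≠ 0 := Function.ne_iff.mp hy
      exact Finset.sum_pos' (fun i _ => sq_nonneg _) ⟨i, mem_univ i, by positivity⟩
    set r := √(∑ i, y i ^ 2)
    have hr : r ≠ 0 := (Real.sqrt_pos.mpr hs).ne'
    refine ⟨r, r⁻¹ • y, ?_, by rw [smul_inv_smul₀ hr]⟩
    simp only [Pi.smul_apply, smul_eq_mul, mul_pow, ← Finset.mul_sum, inv_pow,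
      Real.sq_sqrt hs.le, r]
    exact inv_mul_cancel₀ hs.ne'

namespace MvPolynomial

variable {σ R : Type*}

theorem IsHomogeneous.eval_smul [CommSemiring R] {p : MvPolynomial σ R} {n : ℕ}
    (hp : p.IsHomogeneous n) (c : R) (x : σ → R) :
    eval (c • x) p = c ^ n * eval x p := by
  rw [eval_eq, eval_eq, Finset.mul_sum]
  refine Finset.sum_congr rfl fun d hd => ?_
  simp only [Pi.smul_apply, smul_eq_mul, mul_pow, Finset.prod_mul_distrib,
    Finset.prod_pow_eq_pow_sum, ← hp.degree_eq_sum_deg_support hd]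
  ring

theorem IsHomogeneous.eval_neg [CommRing R] {p : MvPolynomial σ R} {n : ℕ}
    (hp : p.IsHomogeneous n) (x : σ → R) :
    eval (-x) p = (-1) ^ n * eval x p := by
  rw [← hp.eval_smul, neg_one_smul]

theorem homogeneousComponent_add_mul_of_totalDegree_le [CommSemiring R]
    {p q : MvPolynomial σ R} {D E : ℕ} (hp : p.totalDegree ≤ D) (hq : q.totalDegree ≤ E) :
    homogeneousComponent (D + E) (p * q) =
      homogeneousComponent D p * homogeneousComponent E q := by
  classical
  ext μ
  rw [coeff_homogeneousComponent]
  split_ifs with hμ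
  · rw [coeff_mul, coeff_mul]
    refine Finset.sum_congr rfl fun αβ hαβ => ?_
    rw [HasAntidiagonal.mem_antidiagonal] at hαβ
    have hdeg : αβ.1.degree + αβ.2.degree = D + E := by rw [← map_add, hαβ, hμ]
    rw [coeff_homogeneousComponent, coeff_homogeneousComponent]
    by_cases hα : αβ.1.degree = D
    · rw [if_pos hα, if_pos (by omega)]
    · rw [if_neg hα, zero_mul]
      rcases lt_or_gt_of_ne hα with hlt | hgt
      · rw [coeff_eq_zero_of_totalDegree_lt (d := αβ.2) (by rw [← Finsupp.degree_apply]; omega),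
          mul_zero]
      · rw [coeff_eq_zero_of_totalDegree_lt (d := αβ.1) (by rw [← Finsupp.degree_apply]; omega),
          zero_mul]
  · exact (((homogeneousComponent_isHomogeneous D p).mul
      (homogeneousComponent_isHomogeneous E q)).coeff_eq_zero hμ).symm

theorem homogeneousComponent_totalDegree_ne_zero [CommSemiring R] {p : MvPolynomial σ R}
    (hp : p ≠ 0) : homogeneousComponent p.totalDegree p ≠ 0 := by
  obtain ⟨μ, hμ, hdeg⟩ := Finset.exists_mem_eq_sup p.support
    (support_nonempty.mpr hp) (fun s => s.sum fun _ e => e)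
  intro h
  have := coeff_homogeneousComponent (n := p.totalDegree) μ (φ := p)
  rw [h, coeff_zero, if_pos (by rw [totalDegree, hdeg]; rfl)] at this
  exact mem_support_iff.mp hμ this.symm

theorem sum_homogeneousComponent_of_totalDegree_le [CommSemiring R] {p : MvPolynomial σ R}
    {ℓ : ℕ} (hp : p.totalDegree ≤ ℓ) : ∑ i ∈ range (ℓ + 1), homogeneousComponent i p = p := by
  conv_rhs => rw [← sum_homogeneousComponent p]
  refine (Finset.sum_subset (range_subset_range.mpr (by omega)) fun i _ hi => ?_).symm
  exact homogeneousComponent_eq_zero _ _ (by simpa using hi)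

section OrderedRing

variable [CommRing R] [LinearOrder R] [IsStrictOrderedRing R]

theorem eq_zero_of_sum_sq_eq_zero {ι : Type*} {s : Finset ι} {p : ι → MvPolynomial σ R}
    (h : ∑ i ∈ s, p i ^ 2 = 0) {i : ι} (hi : i ∈ s) : p i = 0 := by
  refine MvPolynomial.funext fun x => ?_
  have hx : ∑ j ∈ s, eval x (p j) * eval x (p j) = 0 := by
    simpa [map_sum, sq] using congrArg (eval x) h
  simpa using (Finset.sum_mul_self_eq_zero_iff s _).mp hx i hi

theorem totalDegree_le_of_totalDegree_sum_sq_le {ι : Type*} [Fintype ι]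
    {p : ι → MvPolynomial σ R} {ℓ : ℕ} (h : (∑ i, p i ^ 2).totalDegree ≤ 2 * ℓ) (i : ι) :
    (p i).totalDegree ≤ ℓ := by
  set D := univ.sup fun j => (p j).totalDegree
  have hle (j : ι) : (p j).totalDegree ≤ D := le_sup (f := fun j => (p j).totalDegree) (mem_univ j)
  obtain ⟨i₀, -, hi₀⟩ := exists_mem_eq_sup univ ⟨i, mem_univ i⟩ fun j => (p j).totalDegree
  by_contra! hℓD
  replace hℓD : ℓ < D := hℓD.trans_le (hle i)
  have htop : ∑ j, homogeneousComponent D (p j) ^ 2 = 0 := by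
    rw [← homogeneousComponent_eq_zero (D + D) (∑ j, p j ^ 2) (by omega), map_sum]
    exact Finset.sum_congr rfl fun j _ => by
      rw [sq, sq, homogeneousComponent_add_mul_of_totalDegree_le (hle j) (hle j)]
  have hne : p i₀ ≠ 0 := by
    rintro h0
    rw [h0, totalDegree_zero] at hi₀
    omega
  exact homogeneousComponent_totalDegree_ne_zero hne
    (hi₀ ▸ eq_zero_of_sum_sq_eq_zero htop (mem_univ i₀))

end OrderedRing

variable [Fintype σ]

theorem IsHomogeneous.eq_of_eval_eq_of_sum_sq_eq_one [Nonempty σ] {p q : MvPolynomial σ ℝ}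
    {n : ℕ} (hp : p.IsHomogeneous n) (hq : q.IsHomogeneous n)
    (h : ∀ x : σ → ℝ, ∑ i, x i ^ 2 = 1 → eval x p = eval x q) : p = q := by
  refine MvPolynomial.funext fun y => ?_
  obtain ⟨r, x, hx, rfl⟩ := exists_eq_smul_of_sum_sq_eq_one y
  rw [hp.eval_smul, hq.eval_smul, h x hx]

variable (σ R) in
noncomputable def normSq [CommSemiring R] : MvPolynomial σ R := ∑ i, X i ^ 2

section normSq

variable [CommSemiring R]

@[simp]
theorem eval_normSq (x : σ → R) : eval x (normSq σ R) = ∑ i, x i ^ 2 := by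
  simp [normSq]

theorem isHomogeneous_normSq : (normSq σ R).IsHomogeneous 2 :=
  IsHomogeneous.sum _ _ _ fun i _ => isHomogeneous_X_pow i 2

/-- The homogeneous components of `p` of degree `i ≤ ℓ` with `ℓ - i ≡ r (mod 2)`, each padded by
a power of `normSq` to degree `ℓ - r`; on the unit sphere this is just their sum. -/
noncomputable def parityHomogenization (ℓ r : ℕ) (p : MvPolynomial σ R) : MvPolynomial σ R :=
  ∑ i ∈ (range (ℓ + 1)).filter (fun i => (ℓ - i) % 2 = r),
    normSq σ R ^ ((ℓ - i) / 2) * homogeneousComponent i p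

variable {ℓ r : ℕ} {p : MvPolynomial σ R}

theorem isHomogeneous_parityHomogenization :
    (parityHomogenization ℓ r p).IsHomogeneous (ℓ - r) := by
  refine IsHomogeneous.sum _ _ _ fun i hi => ?_
  simp only [mem_filter, mem_range] at hi
  convert (isHomogeneous_normSq.pow _).mul (homogeneousComponent_isHomogeneous i p) using 1
  omega

theorem parityHomogenization_eq_zero_of_lt (h : ℓ < r) : parityHomogenization ℓ r p = 0 := by
  refine Finset.sum_eq_zero fun i hi => absurd hi ?_
  simp only [mem_filter, mem_range, not_and]
  omega

theorem isHomogeneous_X_pow_mul_parityHomogenization (m : σ) :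
    (X m ^ r * parityHomogenization ℓ r p).IsHomogeneous ℓ := by
  rcases le_or_gt r ℓ with h | h
  · simpa [Nat.add_sub_cancel' h] using
      (isHomogeneous_X_pow m r).mul
        (isHomogeneous_parityHomogenization (ℓ := ℓ) (r := r) (p := p))
  · simpa [parityHomogenization_eq_zero_of_lt h] using isHomogeneous_zero σ R ℓ

theorem eval_parityHomogenization_of_sum_sq_eq_one {x : σ → R} (hx : ∑ i, x i ^ 2 = 1) :
    eval x (parityHomogenization ℓ r p) =
      ∑ i ∈ (range (ℓ + 1)).filter (fun i => (ℓ - i) % 2 = r),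
        eval x (homogeneousComponent i p) := by
  simp [parityHomogenization, hx]

theorem eval_parityHomogenization_add_of_sum_sq_eq_one (hp : p.totalDegree ≤ ℓ) {x : σ → R}
    (hx : ∑ i, x i ^ 2 = 1) :
    eval x (parityHomogenization ℓ 0 p) + eval x (parityHomogenization ℓ 1 p) = eval x p := by
  rw [eval_parityHomogenization_of_sum_sq_eq_one hx, eval_parityHomogenization_of_sum_sq_eq_one hx,
    Finset.filter_congr (p := fun i => (ℓ - i) % 2 = 1) (q := fun i => ¬(ℓ - i) % 2 = 0)
      (fun i _ => by omega),
    Finset.sum_filter_add_sum_filter_not, ← map_sum,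
    sum_homogeneousComponent_of_totalDegree_le hp]

end normSq

theorem eval_neg_parityHomogenization [CommRing R] {ℓ r : ℕ} {p : MvPolynomial σ R}
    (x : σ → R) :
    eval (-x) (parityHomogenization ℓ r p) =
      (-1) ^ (ℓ + r) * eval x (parityHomogenization ℓ r p) := by
  rcases le_or_gt r ℓ with h | h
  · rw [isHomogeneous_parityHomogenization.eval_neg, show ℓ + r = ℓ - r + 2 * r by omega, pow_add,
      pow_mul]
    simp
  · simp [parityHomogenization_eq_zero_of_lt h]

end MvPolynomial

namespace Matrix

variable {ι m n R : Type*} [Fintype ι] [Fintype n]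

theorem map_sum_mul_transpose {S : Type*} [CommSemiring R] [CommSemiring S] (f : R →+* S)
    (V : ι → Matrix m n R) :
    (∑ j, V j * (V j)ᵀ).map f = ∑ j, (V j).map f * ((V j).map f)ᵀ := by
  ext a b
  simp [Matrix.sum_apply, Matrix.mul_apply, map_sum]

theorem add_mul_transpose_add_add_sub_mul_transpose_sub [CommRing R] (A B : Matrix m n R) :
    (A + B) * (A + B)ᵀ + (A - B) * (A - B)ᵀ = (2 : R) • (A * Aᵀ + B * Bᵀ) := by
  simp only [transpose_add, transpose_sub, Matrix.add_mul, Matrix.mul_add, Matrix.sub_mul,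
    Matrix.mul_sub, two_smul]
  abel

theorem trace_sum_mul_transpose [Fintype m] [CommSemiring R] (V : ι → Matrix m n R) :
    trace (∑ j, V j * (V j)ᵀ) = ∑ t : ι × m × n, V t.1 t.2.1 t.2.2 ^ 2 := by
  rw [trace_sum]
  simp only [trace, diag, mul_apply, transpose_apply, Fintype.sum_prod_type, sq]

theorem exists_fin_sum_mul_transpose_eq [Mul R] [AddCommMonoid R] (W : ι → Matrix m n R) :
    ∃ (N : ℕ) (V : Fin N → Matrix m n R), ∑ j, V j * (V j)ᵀ = ∑ i, W i * (W i)ᵀ :=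
  ⟨_, W ∘ (Fintype.equivFin ι).symm,
    Equiv.sum_comp (Fintype.equivFin ι).symm fun i => W i * (W i)ᵀ⟩

end Matrix

namespace MvPolynomial

variable {σ ι κ κ' : Type*} [Fintype ι]

theorem isHomogeneous_sum_mul_transpose_apply [Fintype κ'] {R : Type*} [CommSemiring R]
    {D : ℕ} {V : ι → Matrix κ κ' (MvPolynomial σ R)} (hV : ∀ j a b, (V j a b).IsHomogeneous D)
    (a c : κ) :
    ((∑ j, V j * (V j)ᵀ) a c).IsHomogeneous (D + D) := by
  simp only [Matrix.sum_apply, Matrix.mul_apply, Matrix.transpose_apply]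
  exact IsHomogeneous.sum _ _ _ fun j _ =>
    IsHomogeneous.sum _ _ _ fun b _ => (hV j a b).mul (hV j c b)

theorem totalDegree_le_of_totalDegree_trace_sum_mul_transpose_le [Fintype κ] [Fintype κ']
    {ℓ : ℕ} {V : ι → Matrix κ κ' (MvPolynomial σ ℝ)}
    (h : (∑ j, V j * (V j)ᵀ).trace.totalDegree ≤ 2 * ℓ) (j : ι) (a : κ) (b : κ') :
    (V j a b).totalDegree ≤ ℓ := by
  rw [Matrix.trace_sum_mul_transpose] at h
  exact totalDegree_le_of_totalDegree_sum_sq_le h (j, a, b)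

theorem matrix_eq_of_isHomogeneous_of_map_eval_eq [Fintype σ] [Nonempty σ] {D : ℕ}
    {M N : Matrix κ κ' (MvPolynomial σ ℝ)} (hM : ∀ a b, (M a b).IsHomogeneous D)
    (hN : ∀ a b, (N a b).IsHomogeneous D)
    (h : ∀ x : σ → ℝ, ∑ i, x i ^ 2 = 1 → M.map (eval x) = N.map (eval x)) : M = N :=
  Matrix.ext fun a b => (hM a b).eq_of_eval_eq_of_sum_sq_eq_one (hN a b) fun x hx =>
    congrFun₂ (h x hx) a b

theorem normSq_pow_smul_eq_sum_mul_transpose_iff [Fintype σ] [Fintype κ'] {N : ℕ}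
    {G : Matrix κ κ (MvPolynomial σ ℝ)} {V : ι → Matrix κ κ' (MvPolynomial σ ℝ)} :
    normSq σ ℝ ^ N • G = ∑ j, V j * (V j)ᵀ ↔ ∀ y : σ → ℝ,
      (∑ i, y i ^ 2) ^ N • G.map (eval y) = ∑ j, (V j).map (eval y) * ((V j).map (eval y))ᵀ := by
  have hmap (y : σ → ℝ) :
      (∑ i, y i ^ 2) ^ N • G.map (eval y) = (normSq σ ℝ ^ N • G).map (eval y) := by
    rw [Matrix.map_smul' _ _ _ (map_mul _), map_pow, eval_normSq]
  simp_rw [hmap, ← Matrix.map_sum_mul_transpose]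
  exact ⟨fun h y => by rw [h],
    fun h => Matrix.ext fun a b => MvPolynomial.funext fun y => congrFun₂ (h y) a b⟩

section SphereToSos

variable [Fintype σ] [Fintype κ'] {n ℓ : ℕ} {G : Matrix κ κ (MvPolynomial σ ℝ)}
  {U : ι → Matrix κ κ' (MvPolynomial σ ℝ)}

theorem map_eval_eq_sum_parityHomogenization_of_sum_sq_eq_one
    (hG : ∀ a b, (G a b).IsHomogeneous (2 * n)) (hU : ∀ j a b, (U j a b).totalDegree ≤ ℓ)
    (hGU : ∀ x : σ → ℝ, ∑ i, x i ^ 2 = 1 →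
      G.map (eval x) = ∑ j, (U j).map (eval x) * ((U j).map (eval x))ᵀ)
    {x : σ → ℝ} (hx : ∑ i, x i ^ 2 = 1) :
    G.map (eval x) = ∑ j,
      (((U j).map (parityHomogenization ℓ 0)).map (eval x) *
          (((U j).map (parityHomogenization ℓ 0)).map (eval x))ᵀ +
        ((U j).map (parityHomogenization ℓ 1)).map (eval x) *
          (((U j).map (parityHomogenization ℓ 1)).map (eval x))ᵀ) := by
  set A : ι → Matrix κ κ' ℝ := fun j => ((U j).map (parityHomogenization ℓ 0)).map (eval x)
  set B : ι → Matrix κ κ' ℝ := fun j => ((U j).map (parityHomogenization ℓ 1)).map (eval x)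
  have hx' : ∑ i, (-x) i ^ 2 = 1 := by simpa using hx
  have hUx (j : ι) : (U j).map (eval x) = A j + B j := Matrix.ext fun a b =>
    (eval_parityHomogenization_add_of_sum_sq_eq_one (hU j a b) hx).symm
  have hUnegx (j : ι) : (U j).map (eval (-x)) = (-1 : ℝ) ^ ℓ • (A j - B j) :=
    Matrix.ext fun a b => by
      rw [map_apply, ← eval_parityHomogenization_add_of_sum_sq_eq_one (hU j a b) hx',
        eval_neg_parityHomogenization, eval_neg_parityHomogenization]
      simp only [A, B, Matrix.smul_apply, Matrix.sub_apply, map_apply, smul_eq_mul, pow_succ]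
      ring
  have hGnegx : G.map (eval (-x)) = G.map (eval x) := Matrix.ext fun a b => by
    simp [(hG a b).eval_neg, pow_mul]
  have hsign (M : Matrix κ κ' ℝ) : ((-1 : ℝ) ^ ℓ • M) * ((-1 : ℝ) ^ ℓ • M)ᵀ = M * Mᵀ := by
    rw [transpose_smul, Matrix.smul_mul, Matrix.mul_smul, smul_smul, ← mul_pow]
    simp
  -- Average the identity at `x` and `-x`: the cross terms `A Bᵀ` and `B Aᵀ` cancel.
  apply smul_right_injective _ (two_ne_zero : (2 : ℝ) ≠ 0)
  calc (2 : ℝ) • G.map (eval x) = G.map (eval x) + G.map (eval (-x)) := by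
        rw [hGnegx, two_smul]
    _ = ∑ j, ((A j + B j) * (A j + B j)ᵀ + (A j - B j) * (A j - B j)ᵀ) := by
      rw [hGU x hx, hGU (-x) hx', ← Finset.sum_add_distrib]
      simp only [hUx, hUnegx, hsign]
    _ = (2 : ℝ) • ∑ j, (A j * (A j)ᵀ + B j * (B j)ᵀ) := by
      simp only [Matrix.add_mul_transpose_add_add_sub_mul_transpose_sub, Finset.smul_sum]

theorem normSq_pow_smul_eq_sum_parityHomogenization [Nonempty σ] (hnℓ : n ≤ ℓ)
    (hG : ∀ a b, (G a b).IsHomogeneous (2 * n)) (hU : ∀ j a b, (U j a b).totalDegree ≤ ℓ)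
    (hGU : ∀ x : σ → ℝ, ∑ i, x i ^ 2 = 1 →
      G.map (eval x) = ∑ j, (U j).map (eval x) * ((U j).map (eval x))ᵀ) :
    normSq σ ℝ ^ (ℓ - n) • G =
      ∑ j, (U j).map (parityHomogenization ℓ 0) * ((U j).map (parityHomogenization ℓ 0))ᵀ +
        ∑ t : ι × σ, ((X t.2 : MvPolynomial σ ℝ) • (U t.1).map (parityHomogenization ℓ 1)) *
          ((X t.2 : MvPolynomial σ ℝ) • (U t.1).map (parityHomogenization ℓ 1))ᵀ := by
  refine matrix_eq_of_isHomogeneous_of_map_eval_eq (D := 2 * ℓ) (fun a c => ?_) (fun a c => ?_)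
    fun x hx => ?_
  · rw [show 2 * ℓ = 2 * (ℓ - n) + 2 * n by omega]
    exact (isHomogeneous_normSq.pow (ℓ - n)).mul (hG a c)
  · have hE (j : ι) (a : κ) (b : κ') :
        ((U j).map (parityHomogenization ℓ 0) a b).IsHomogeneous ℓ :=
      isHomogeneous_parityHomogenization
    have hO (t : ι × σ) (a : κ) (b : κ') :
        (((X t.2 : MvPolynomial σ ℝ) • (U t.1).map (parityHomogenization ℓ 1)) a b).IsHomogeneous
          ℓ := by
      simpa using isHomogeneous_X_pow_mul_parityHomogenization (r := 1) (p := U t.1 a b) t.2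
    rw [two_mul]
    exact (isHomogeneous_sum_mul_transpose_apply hE a c).add
      (isHomogeneous_sum_mul_transpose_apply hO a c)
  · have hO (M : Matrix κ κ' (MvPolynomial σ ℝ)) :
        ∑ i, ((X i : MvPolynomial σ ℝ) • M).map (eval x) *
            (((X i : MvPolynomial σ ℝ) • M).map (eval x))ᵀ =
          M.map (eval x) * (M.map (eval x))ᵀ := by
      have hX (i : σ) : ((X i : MvPolynomial σ ℝ) • M).map (eval x) = x i • M.map (eval x) :=
        Matrix.ext fun a b => by simp
      simp_rw [hX, transpose_smul, Matrix.smul_mul, Matrix.mul_smul, smul_smul,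
        ← Finset.sum_smul, ← sq, hx, one_smul]
    rw [Matrix.map_smul' _ _ _ (map_mul _), map_pow, eval_normSq, hx, one_pow, one_smul,
      map_eval_eq_sum_parityHomogenization_of_sum_sq_eq_one hG hU hGU hx,
      Matrix.map_add _ (map_add _), Matrix.map_sum_mul_transpose, Matrix.map_sum_mul_transpose,
      Fintype.sum_prod_type, Finset.sum_add_distrib]
    simp only [hO]

end SphereToSos

end MvPolynomial

theorem stmt_19_general (d k n ℓ : ℕ) (hd : 0 < d) (hℓ : n ≤ ℓ)
    (G : Matrix (Fin k) (Fin k) (MvPolynomial (Fin d) ℝ))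
    (hGhom : ∀ a b, (G a b).IsHomogeneous (2 * n)) :
    IsMatrixSosOnSphere d k ℓ G ↔
    ∃ (m : ℕ) (V : Fin m → Matrix (Fin k) (Fin k) (MvPolynomial (Fin d) ℝ)),
      ∀ y : Fin d → ℝ,
        ((∑ i, y i ^ 2) ^ (ℓ - n)) • (G.map (MvPolynomial.eval y))
          = ∑ j, (V j).map (MvPolynomial.eval y) * ((V j).map (MvPolynomial.eval y))ᵀ := by
  have : Nonempty (Fin d) := ⟨⟨0, hd⟩⟩
  simp_rw [← normSq_pow_smul_eq_sum_mul_transpose_iff]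
  constructor
  · rintro ⟨m, U, hU, hGU⟩
    obtain ⟨N, V, hV⟩ := Matrix.exists_fin_sum_mul_transpose_eq (Sum.elim
      (fun j => (U j).map (parityHomogenization ℓ 0)) fun t : Fin m × Fin d =>
        (X t.2 : MvPolynomial (Fin d) ℝ) • (U t.1).map (parityHomogenization ℓ 1))
    refine ⟨N, V, ?_⟩
    rw [hV, Fintype.sum_sum_type, normSq_pow_smul_eq_sum_parityHomogenization hℓ hGhom hU hGU]
    simp only [Sum.elim_inl, Sum.elim_inr]
  · rintro ⟨m, V, hV⟩
    refine ⟨m, V, totalDegree_le_of_totalDegree_trace_sum_mul_transpose_le ?_, fun x hx => ?_⟩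
    · rw [← hV, trace_smul, smul_eq_mul]
      exact ((isHomogeneous_normSq.pow _).mul
        (IsHomogeneous.sum _ _ _ fun a _ => hGhom a a)).totalDegree_le.trans_eq (by omega)
    · simpa [hx] using normSq_pow_smul_eq_sum_mul_transpose_iff.mp hV x

/-- a symmetric matrix-valued homogeneous polynomial `G` of degree `2n` is
`ℓ`-sos on `S^{d-1}` (for `ℓ ≥ n`) if and only if `‖y‖^{2(ℓ-n)}·G(y)` is a sum of squares
`∑_j V_j(y) V_j(y)ᵀ` of matrix polynomials on all of `ℝ^d`. -/
theorem stmt_19 (d k n ℓ : ℕ) (hd : 0 < d) (hk : 0 < k) (hℓ : n ≤ ℓ)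
    (G : Matrix (Fin k) (Fin k) (MvPolynomial (Fin d) ℝ))
    (hGhom : ∀ a b, (G a b).IsHomogeneous (2 * n)) (hGsym : Gᵀ = G) :
    IsMatrixSosOnSphere d k ℓ G ↔
    ∃ (m : ℕ) (V : Fin m → Matrix (Fin k) (Fin k) (MvPolynomial (Fin d) ℝ)),
      ∀ y : Fin d → ℝ,
        ((∑ i, y i ^ 2) ^ (ℓ - n)) • (G.map (MvPolynomial.eval y))
          = ∑ j, (V j).map (MvPolynomial.eval y) * ((V j).map (MvPolynomial.eval y))ᵀ :=
  stmt_19_general d k n ℓ hd hℓ G hGhom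
end
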